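/- Let K be a field, V a K-vector space, and B a symmetric bilinear form on V (B x y = B y x for all x, y). Suppose B admits a left copairing: there exist k and families α, β : Fin k → V with v = Σ_{i} (B (β i) v) • (α i) for all v ∈ V. Then V is finite-dimensional and the adjoint map V → Dual K V sending v to the functional (fun w => B v w) is a linear equivalence; that is, B is a perfect pairing. -/
import Mathlib


/-- A symmetric bilinear form admitting a left copairing makes `V` finite-dimensional and
is a perfect pairing: the adjoint map `V → Dual K V`, `v ↦ (fun w => B v w)`, is a linear
equivalence (i.e. bijective). -/
theorem symm_left_copairing_perfect
    (K : Type*) [Field K] (V : Type*) [AddCommGroup V] [Module K V]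
    (B : V →ₗ[K] V →ₗ[K] K)
    (hsymm : ∀ x y : V, B x y = B y x)
    (hcopair : ∃ (k : ℕ) (α β : Fin k → V),
      ∀ v : V, v = ∑ i : Fin k, (B (β i) v) • (α i)) :
    FiniteDimensional K V ∧
      Function.Bijective (B : V → Module.Dual K V) := by
  classical
  obtain ⟨k, α, β, h⟩ := hcopair
  have hspan : (⊤ : Submodule K V) ≤ Submodule.span K (Set.range α) := by
    intro v _
    rw [h v]
    exact Submodule.sum_mem _ fun i _ =>
      Submodule.smul_mem _ _ (Submodule.subset_span ⟨i, rfl⟩)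
  have hfin : FiniteDimensional K V :=
    ⟨⟨Finset.univ.image α, by
      rw [Finset.coe_image, Finset.coe_univ, Set.image_univ]
      exact le_antisymm le_top hspan⟩⟩
  refine ⟨hfin, ?_⟩
  have hinj : Function.Injective (B : V → Module.Dual K V) := by
    rw [← LinearMap.ker_eq_bot]
    rw [Submodule.eq_bot_iff]
    intro v hv
    rw [LinearMap.mem_ker] at hv
    rw [h v]
    have : ∀ i, B (β i) v = 0 := fun i => by
      rw [hsymm, hv]; rfl
    simp [this]
  exact ⟨hinj, (LinearMap.injective_iff_surjective_of_finrank_eq_finrank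
    (Subspace.dual_finrank_eq (K := K) (V := V)).symm).mp hinj⟩
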